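/- For every integer n ≥ 1 there exists a finite family F of closed axis-parallel rectangles in ℝ² containing n designated pairwise distinct members q₁, …, q_n such that for every subset T ⊆ {1, …, n} there is a member s_T ∈ F, distinct from all q_i, with the following property: in the intersection graph of F, the set of indices i ∈ {1, …, n} such that q_i is at graph distance at most 2 from s_T is exactly T. Consequently, the set systems formed by the distance-2 closed neighborhoods in intersection graphs of axis-parallel rectangles have unbounded VC-dimension: for every n, some such system shatters a set of n vertices. -/

import Mathlib

/-!
Place points `q i` on an antidiagonal and points `s T` on a parallel antidiagonal above and to
the right. Both families are antichains for the product order, so the box `Icc (q i) (s T)`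
contains no designated point besides its two corners. The family consists of the points
themselves (as degenerate rectangles) and the boxes `Icc (q i) (s T)` for `i ∈ T`; then the only
possible common neighbour of `q i` and `s T` is the box spanned by them, so `q i` is within
distance 2 of `s T` exactly when `i ∈ T`.
-/

/-- A closed axis-parallel rectangle in `ℝ²`. -/
def IsRect (R : Set (ℝ × ℝ)) : Prop :=
  ∃ a b c d : ℝ, a ≤ b ∧ c ≤ d ∧ R = Set.Icc a b ×ˢ Set.Icc c d

/-- The intersection graph of a family of sets: two distinct members are adjacent
iff they intersect. -/
def interGraph (F : Set (Set (ℝ × ℝ))) : SimpleGraph ↥F :=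
  SimpleGraph.fromRel fun u v => (u.1 ∩ v.1).Nonempty

/-- `A` is shattered by a family `Fam` of sets. -/
def Shatters {α : Type*} (Fam : Set (Set α)) (A : Set α) : Prop :=
  ∀ B ⊆ A, ∃ S ∈ Fam, S ∩ A = B

open Set

theorem isRect_Icc {a b : ℝ × ℝ} (hab : a ≤ b) : IsRect (Icc a b) :=
  ⟨a.1, b.1, a.2, b.2, hab.1, hab.2, Icc_prod_eq a b⟩

theorem shatters_range_of_forall_exists {α ι : Type*} {Fam : Set (Set α)} (f : ι → α)
    (h : ∀ T : Set ι, ∃ S ∈ Fam, ∀ i, f i ∈ S ↔ i ∈ T) : Shatters Fam (range f) := by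
  intro B hB
  obtain ⟨S, hS, hST⟩ := h (f ⁻¹' B)
  refine ⟨S, hS, Subset.antisymm ?_ fun x hx => ?_⟩
  · rintro _ ⟨hiS, i, rfl⟩
    exact (hST i).1 hiS
  · obtain ⟨i, rfl⟩ := hB hx
    exact ⟨(hST i).2 hx, i, rfl⟩

theorem SimpleGraph.edist_le_two_iff_of_not_adj {V : Type*} {G : SimpleGraph V} {u v : V}
    (huv : u ≠ v) (hadj : ¬G.Adj u v) :
    G.edist u v ≤ 2 ↔ (G.commonNeighbors u v).Nonempty := by
  rw [← not_lt, two_lt_edist_iff, nonempty_iff_ne_empty]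
  tauto

theorem interGraph_adj {F : Set (Set (ℝ × ℝ))} {u v : F} :
    (interGraph F).Adj u v ↔ u ≠ v ∧ (u.1 ∩ v.1).Nonempty := by
  rw [interGraph, SimpleGraph.fromRel_adj, inter_comm v.1, or_self]

theorem interGraph_edist_singleton_le_two_iff {F : Set (Set (ℝ × ℝ))} {a b : ℝ × ℝ}
    (hab : a ≠ b) (ha : {a} ∈ F) (hb : {b} ∈ F) :
    (interGraph F).edist ⟨{a}, ha⟩ ⟨{b}, hb⟩ ≤ 2 ↔ ∃ B ∈ F, a ∈ B ∧ b ∈ B := by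
  have hne : (⟨{a}, ha⟩ : F) ≠ ⟨{b}, hb⟩ := fun h => hab (singleton_injective congr($h.1))
  rw [SimpleGraph.edist_le_two_iff_of_not_adj hne
    fun h => hab (by simpa [eq_comm] using (interGraph_adj.1 h).2)]
  constructor
  · rintro ⟨⟨B, hB⟩, hw⟩
    rw [SimpleGraph.mem_commonNeighbors, interGraph_adj, interGraph_adj] at hw
    exact ⟨B, hB, singleton_inter_nonempty.1 hw.1.2, singleton_inter_nonempty.1 hw.2.2⟩
  · rintro ⟨B, hB, haB, hbB⟩
    refine ⟨⟨B, hB⟩, ?_⟩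
    rw [SimpleGraph.mem_commonNeighbors, interGraph_adj, interGraph_adj]
    refine ⟨⟨fun h => hab ?_, singleton_inter_nonempty.2 haB⟩,
      ⟨fun h => hab ?_, singleton_inter_nonempty.2 hbB⟩⟩
    · exact (eq_of_mem_singleton (Subtype.mk.inj h ▸ hbB : b ∈ ({a} : Set _))).symm
    · exact eq_of_mem_singleton (Subtype.mk.inj h ▸ haB : a ∈ ({b} : Set _))

section BoxFamily

variable {ι κ : Type*} (q : ι → ℝ × ℝ) (s : κ → ℝ × ℝ) (R : ι → κ → Prop)

def boxFamily : Set (Set (ℝ × ℝ)) :=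
  range (fun i => {q i}) ∪ range (fun k => {s k}) ∪
    (fun p : ι × κ => Icc (q p.1) (s p.2)) '' {p | R p.1 p.2}

variable {q s R}

theorem singleton_left_mem_boxFamily (i : ι) : {q i} ∈ boxFamily q s R :=
  Or.inl (Or.inl ⟨i, rfl⟩)

theorem singleton_right_mem_boxFamily (k : κ) : {s k} ∈ boxFamily q s R :=
  Or.inl (Or.inr ⟨k, rfl⟩)

theorem boxFamily_finite [Finite ι] [Finite κ] : (boxFamily q s R).Finite :=
  ((finite_range _).union (finite_range _)).union (toFinite _)

theorem boxFamily_isRect (hqs : ∀ i k, q i ≤ s k) : ∀ B ∈ boxFamily q s R, IsRect B := by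
  rintro B ((⟨i, rfl⟩ | ⟨k, rfl⟩) | ⟨⟨i, k⟩, -, rfl⟩)
  · exact (Icc_self (q i) ▸ isRect_Icc le_rfl : IsRect {q i})
  · exact (Icc_self (s k) ▸ isRect_Icc le_rfl : IsRect {s k})
  · exact isRect_Icc (hqs i k)

theorem exists_mem_boxFamily_iff (hq : ∀ i j, q i ≤ q j → i = j)
    (hs : ∀ k l, s k ≤ s l → k = l) (hqs : ∀ i k, q i < s k) (i : ι) (k : κ) :
    (∃ B ∈ boxFamily q s R, q i ∈ B ∧ s k ∈ B) ↔ R i k := by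
  refine ⟨?_, fun h => ⟨_, Or.inr ⟨(i, k), h, rfl⟩, left_mem_Icc.2 (hqs i k).le,
    right_mem_Icc.2 (hqs i k).le⟩⟩
  rintro ⟨B, (⟨j, rfl⟩ | ⟨l, rfl⟩) | ⟨⟨j, l⟩, hjl, rfl⟩, hiB, hkB⟩
  · exact absurd ((eq_of_mem_singleton hiB).trans (eq_of_mem_singleton hkB).symm) (hqs i k).ne
  · exact absurd ((eq_of_mem_singleton hiB).trans (eq_of_mem_singleton hkB).symm) (hqs i k).ne
  · rwa [← hq j i hiB.1, hs k l hkB.2]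

theorem boxFamily_edist_le_two_iff (hq : ∀ i j, q i ≤ q j → i = j)
    (hs : ∀ k l, s k ≤ s l → k = l) (hqs : ∀ i k, q i < s k) (i : ι) (k : κ) :
    (interGraph (boxFamily q s R)).edist ⟨{q i}, singleton_left_mem_boxFamily i⟩
      ⟨{s k}, singleton_right_mem_boxFamily k⟩ ≤ 2 ↔ R i k := by
  rw [interGraph_edist_singleton_le_two_iff (hqs i k).ne, exists_mem_boxFamily_iff hq hs hqs]

end BoxFamily

def antidiag (a : ℝ) : ℝ × ℝ := (a, -a)

theorem antidiag_le_antidiag_iff {a b : ℝ} : antidiag a ≤ antidiag b ↔ a = b := by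
  simp only [antidiag, Prod.mk_le_mk, neg_le_neg_iff]
  exact ⟨fun h => le_antisymm h.1 h.2, fun h => ⟨h.le, h.ge⟩⟩

theorem antidiag_lt_add_antidiag {a b c : ℝ} (h₁ : a < c + b) (h₂ : b ≤ c + a) :
    antidiag a < (c, c) + antidiag b := by
  simp only [antidiag, Prod.mk_add_mk, Prod.lt_iff]
  left
  constructor <;> linarith

theorem exists_antichain_above_antidiag (n : ℕ) (κ : Type*) [Fintype κ] :
    ∃ s : κ → ℝ × ℝ, (∀ k l, s k ≤ s l → k = l) ∧ ∀ (i : Fin n) k, antidiag (i : ℕ) < s k := by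
  let e := Fintype.equivFin κ
  let c : ℝ := n + Fintype.card κ
  refine ⟨fun k => (c, c) + antidiag (e k : ℕ), fun k l h => ?_, fun i k => ?_⟩
  · rw [add_le_add_iff_left, antidiag_le_antidiag_iff, Nat.cast_inj] at h
    exact e.injective (Fin.ext h)
  · have hi : ((i : ℕ) : ℝ) < n := by exact_mod_cast i.isLt
    have hk : ((e k : ℕ) : ℝ) < Fintype.card κ := by exact_mod_cast (e k).isLt
    have hi₀ : (0 : ℝ) ≤ (i : ℕ) := Nat.cast_nonneg _
    have hk₀ : (0 : ℝ) ≤ (e k : ℕ) := Nat.cast_nonneg _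
    exact antidiag_lt_add_antidiag (by linarith) (by linarith)

theorem stmt19_general (n : ℕ) :
    ∃ F : Set (Set (ℝ × ℝ)), F.Finite ∧ (∀ R ∈ F, IsRect R) ∧
      ∃ (q : Fin n → Set (ℝ × ℝ)) (hq : ∀ i, q i ∈ F), Function.Injective q ∧
        (∀ T : Set (Fin n), ∃ s, ∃ hs : s ∈ F, (∀ i, s ≠ q i) ∧
          ∀ i : Fin n, ((interGraph F).edist ⟨q i, hq i⟩ ⟨s, hs⟩ ≤ 2 ↔ i ∈ T)) ∧
        Shatters {N : Set ↥F | ∃ v : ↥F, N = {u : ↥F | (interGraph F).edist u v ≤ 2}}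
          (Set.range fun i => (⟨q i, hq i⟩ : ↥F)) := by
  obtain ⟨s, hs, hqs⟩ := exists_antichain_above_antidiag n (Set (Fin n))
  have hq (i j : Fin n) (h : antidiag (i : ℕ) ≤ antidiag (j : ℕ)) : i = j :=
    Fin.ext (Nat.cast_injective (antidiag_le_antidiag_iff.1 h))
  have hdist := boxFamily_edist_le_two_iff (R := fun i T => i ∈ T) hq hs hqs
  refine ⟨_, boxFamily_finite, boxFamily_isRect fun i T => (hqs i T).le,
    fun i => {antidiag (i : ℕ)}, singleton_left_mem_boxFamily,
    singleton_injective.comp fun i j h => hq i j h.le,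
    fun T => ⟨{s T}, singleton_right_mem_boxFamily T,
      fun i h => (hqs i T).ne' (singleton_injective h), fun i => hdist i T⟩,
    shatters_range_of_forall_exists _ fun T =>
      ⟨_, ⟨⟨{s T}, singleton_right_mem_boxFamily T⟩, rfl⟩, fun i => hdist i T⟩⟩

theorem stmt19 (n : ℕ) (hn : 1 ≤ n) :
    ∃ F : Set (Set (ℝ × ℝ)), F.Finite ∧ (∀ R ∈ F, IsRect R) ∧
      ∃ (q : Fin n → Set (ℝ × ℝ)) (hq : ∀ i, q i ∈ F), Function.Injective q ∧
        (∀ T : Set (Fin n), ∃ s, ∃ hs : s ∈ F, (∀ i, s ≠ q i) ∧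
          ∀ i : Fin n, ((interGraph F).edist ⟨q i, hq i⟩ ⟨s, hs⟩ ≤ 2 ↔ i ∈ T)) ∧
        Shatters {N : Set ↥F | ∃ v : ↥F, N = {u : ↥F | (interGraph F).edist u v ≤ 2}}
          (Set.range fun i => (⟨q i, hq i⟩ : ↥F)) :=
  stmt19_general n
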